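/- arXiv:2502.10226 — 3 statements merged into one kernel-verified Lean document; each statement's English description precedes it below -/
import Mathlib

section
/- For any two distinct partitions P₁ and P₂ of a finite set A with |A| = n ≥ 2, there exists a sequence of at most n−1 operations, each a split or a merge, transforming P₁ into P₂. -/
variable {α : Type*} [DecidableEq α]

/-- `P` is a partition of the finite set `A`: blocks are nonempty, pairwise disjoint,
and their union is `A`. -/
def IsPartition (A : Finset α) (P : Finset (Finset α)) : Prop :=
  (∀ C ∈ P, C.Nonempty) ∧
  (∀ C ∈ P, ∀ D ∈ P, C ≠ D → Disjoint C D) ∧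
  P.biUnion id = A

/-- `Q` is obtained from `P` by merging two distinct blocks. -/
def Merge (P Q : Finset (Finset α)) : Prop :=
  ∃ C ∈ P, ∃ D ∈ P, C ≠ D ∧ Q = (P \ {C, D}) ∪ {C ∪ D}

/-- `Q` is obtained from `P` by splitting a block into two nonempty disjoint parts. -/
def Split (P Q : Finset (Finset α)) : Prop :=
  ∃ C ∈ P, ∃ C₁ C₂ : Finset α, C₁.Nonempty ∧ C₂.Nonempty ∧ Disjoint C₁ C₂ ∧
    C₁ ∪ C₂ = C ∧ Q = (P \ {C}) ∪ {C₁, C₂}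

/-- `Q` is reachable from `P` in exactly `k` steps of the relation `R`. -/
def ReachIn (R : Finset (Finset α) → Finset (Finset α) → Prop)
    (k : ℕ) (P Q : Finset (Finset α)) : Prop :=
  ∃ f : ℕ → Finset (Finset α), f 0 = P ∧ f k = Q ∧ ∀ i < k, R (f i) (f (i + 1))

/-! ### Auxiliary lemmas -/

/-- The step relation: one split or one merge. -/
def SM (P Q : Finset (Finset α)) : Prop := Split P Q ∨ Merge P Q

lemma reachIn_refl {R : Finset (Finset α) → Finset (Finset α) → Prop}
    (P : Finset (Finset α)) : ReachIn R 0 P P :=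
  ⟨fun _ => P, rfl, rfl, fun i hi => absurd hi (Nat.not_lt_zero i)⟩

lemma reachIn_single {R : Finset (Finset α) → Finset (Finset α) → Prop}
    {P Q : Finset (Finset α)} (h : R P Q) : ReachIn R 1 P Q := by
  refine ⟨fun i => if i = 0 then P else Q, by simp, by simp, ?_⟩
  intro i hi
  have : i = 0 := by omega
  subst this
  simpa using h

lemma reachIn_trans {R : Finset (Finset α) → Finset (Finset α) → Prop}
    {k l : ℕ} {P Q S : Finset (Finset α)}
    (h1 : ReachIn R k P Q) (h2 : ReachIn R l Q S) : ReachIn R (k + l) P S := by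
  obtain ⟨f, hf0, hfk, hf⟩ := h1
  obtain ⟨g, hg0, hgl, hg⟩ := h2
  have hfg : f k = g 0 := by rw [hfk, hg0]
  refine ⟨fun i => if i < k then f i else g (i - k), ?_, ?_, ?_⟩
  · by_cases h : 0 < k
    · simp [h, hf0]
    · have hk : k = 0 := by omega
      subst hk
      simpa using hg0.trans (hfk.symm.trans hf0)
  · have h : ¬ (k + l < k) := by omega
    simp only [h, if_false]
    rwa [Nat.add_sub_cancel_left]
  · intro i hi
    by_cases h : i < k
    · have h1 : (if i < k then f i else g (i - k)) = f i := by simp [h]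
      have h2 : (if i + 1 < k then f (i + 1) else g (i + 1 - k)) = f (i + 1) := by
        by_cases h' : i + 1 < k
        · simp [h']
        · have : i + 1 = k := by omega
          simp [h', this, hfg.symm]
      dsimp only
      rw [h1, h2]
      exact hf i h
    · have h1 : (if i < k then f i else g (i - k)) = g (i - k) := by simp [h]
      have h2 : (if i + 1 < k then f (i + 1) else g (i + 1 - k)) = g (i - k + 1) := by
        have h' : ¬ (i + 1 < k) := by omega
        have : i + 1 - k = i - k + 1 := by omega
        simp [h', this]
      dsimp only
      rw [h1, h2]
      exact hg (i - k) (by omega)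

lemma biUnion_merge {S : Finset (Finset α)} {C D : Finset α} (hC : C ∈ S) (hD : D ∈ S) :
    ((S \ {C, D}) ∪ {C ∪ D}).biUnion id = S.biUnion id := by
  ext a
  simp only [Finset.mem_biUnion, id, Finset.mem_union, Finset.mem_sdiff,
    Finset.mem_singleton, Finset.mem_insert]
  constructor
  · rintro ⟨E, hE | hE, ha⟩
    · exact ⟨E, hE.1, ha⟩
    · subst hE
      rcases Finset.mem_union.1 ha with h | h
      exacts [⟨C, hC, h⟩, ⟨D, hD, h⟩]
  · rintro ⟨E, hE, ha⟩
    by_cases h : E = C ∨ E = D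
    · refine ⟨C ∪ D, Or.inr rfl, ?_⟩
      rcases h with rfl | rfl
      exacts [Finset.mem_union_left _ ha, Finset.mem_union_right _ ha]
    · exact ⟨E, Or.inl ⟨hE, by tauto⟩, ha⟩

lemma merge_isPartition {A : Finset α} {P Q : Finset (Finset α)}
    (hP : IsPartition A P) (h : Merge P Q) : IsPartition A Q := by
  obtain ⟨C, hC, D, hD, hCD, rfl⟩ := h
  obtain ⟨hne, hdisj, hcov⟩ := hP
  refine ⟨?_, ?_, ?_⟩
  · intro E hE
    rcases Finset.mem_union.1 hE with h | h
    · exact hne E (Finset.mem_sdiff.1 h).1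
    · rw [Finset.mem_singleton.1 h]
      exact (hne C hC).mono Finset.subset_union_left
  · intro E hE F hF hEF
    rcases Finset.mem_union.1 hE with h | h
    · rcases Finset.mem_union.1 hF with h' | h'
      · exact hdisj E (Finset.mem_sdiff.1 h).1 F (Finset.mem_sdiff.1 h').1 hEF
      · rw [Finset.mem_singleton.1 h']
        obtain ⟨hEP, hEcd⟩ := Finset.mem_sdiff.1 h
        simp only [Finset.mem_insert, Finset.mem_singleton, not_or] at hEcd
        rw [Finset.disjoint_union_right]
        exact ⟨hdisj E hEP C hC hEcd.1, hdisj E hEP D hD hEcd.2⟩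
    · rw [Finset.mem_singleton.1 h]
      rcases Finset.mem_union.1 hF with h' | h'
      · obtain ⟨hFP, hFcd⟩ := Finset.mem_sdiff.1 h'
        simp only [Finset.mem_insert, Finset.mem_singleton, not_or] at hFcd
        rw [Finset.disjoint_union_left]
        exact ⟨(hdisj F hFP C hC hFcd.1).symm, (hdisj F hFP D hD hFcd.2).symm⟩
      · exact absurd ((Finset.mem_singleton.1 h).trans (Finset.mem_singleton.1 h').symm) hEF
  · rw [biUnion_merge hC hD, hcov]

lemma split_isPartition {A : Finset α} {P Q : Finset (Finset α)}
    (hP : IsPartition A P) (h : Split P Q) : IsPartition A Q := by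
  obtain ⟨C, hC, C₁, C₂, h1, h2, h3, h4, rfl⟩ := h
  obtain ⟨hne, hdisj, hcov⟩ := hP
  have hsub1 : C₁ ⊆ C := h4 ▸ Finset.subset_union_left
  have hsub2 : C₂ ⊆ C := h4 ▸ Finset.subset_union_right
  refine ⟨?_, ?_, ?_⟩
  · intro E hE
    rcases Finset.mem_union.1 hE with h | h
    · exact hne E (Finset.mem_sdiff.1 h).1
    · rcases Finset.mem_insert.1 h with h' | h'
      · rwa [h']
      · rw [Finset.mem_singleton.1 h']
        exact h2
  · intro E hE F hF hEF
    have key : ∀ X, (X = C₁ ∨ X = C₂) → ∀ Y ∈ P \ {C}, Disjoint X Y := by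
      rintro X hX Y hY
      obtain ⟨hYP, hYC⟩ := Finset.mem_sdiff.1 hY
      rw [Finset.mem_singleton] at hYC
      have hd : Disjoint C Y := hdisj C hC Y hYP (Ne.symm hYC)
      rcases hX with rfl | rfl
      exacts [hd.mono_left hsub1, hd.mono_left hsub2]
    rcases Finset.mem_union.1 hE with h | h
    · rcases Finset.mem_union.1 hF with h' | h'
      · exact hdisj E (Finset.mem_sdiff.1 h).1 F (Finset.mem_sdiff.1 h').1 hEF
      · have := key F (by simpa [Finset.mem_insert, Finset.mem_singleton] using h') E h
        exact this.symm
    · rcases Finset.mem_union.1 hF with h' | h'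
      · exact key E (by simpa [Finset.mem_insert, Finset.mem_singleton] using h) F h'
      · have hE' : E = C₁ ∨ E = C₂ := by simpa using h
        have hF' : F = C₁ ∨ F = C₂ := by simpa using h'
        rcases hE' with rfl | rfl <;> rcases hF' with rfl | rfl
        · exact absurd rfl hEF
        · exact h3
        · exact h3.symm
        · exact absurd rfl hEF
  · rw [← hcov]
    ext a
    simp only [Finset.mem_biUnion, id, Finset.mem_union, Finset.mem_sdiff,
      Finset.mem_singleton, Finset.mem_insert]
    constructor
    · rintro ⟨E, hE | hE, ha⟩
      · exact ⟨E, hE.1, ha⟩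
      · rcases hE with rfl | rfl
        exacts [⟨C, hC, hsub1 ha⟩, ⟨C, hC, hsub2 ha⟩]
    · rintro ⟨E, hE, ha⟩
      by_cases h : E = C
      · subst h
        rw [← h4] at ha
        rcases Finset.mem_union.1 ha with h | h
        exacts [⟨C₁, Or.inr (Or.inl rfl), h⟩, ⟨C₂, Or.inr (Or.inr rfl), h⟩]
      · exact ⟨E, Or.inl ⟨hE, h⟩, ha⟩

lemma sm_isPartition {A : Finset α} {P Q : Finset (Finset α)}
    (hP : IsPartition A P) (h : SM P Q) : IsPartition A Q := by
  rcases h with h | h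
  exacts [split_isPartition hP h, merge_isPartition hP h]

lemma split_lift {B : Finset α} {P Q : Finset (Finset α)} (hB : B ∉ P)
    (h : Split P Q) : Split (P ∪ {B}) (Q ∪ {B}) := by
  obtain ⟨C, hC, C₁, C₂, h1, h2, h3, h4, rfl⟩ := h
  have hBC : B ≠ C := fun h => hB (h ▸ hC)
  refine ⟨C, Finset.mem_union_left _ hC, C₁, C₂, h1, h2, h3, h4, ?_⟩
  ext E
  have : E = B → E ≠ C := fun h => h ▸ hBC
  simp only [Finset.mem_union, Finset.mem_sdiff, Finset.mem_singleton, Finset.mem_insert]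
  tauto

lemma merge_lift {B : Finset α} {P Q : Finset (Finset α)} (hB : B ∉ P)
    (h : Merge P Q) : Merge (P ∪ {B}) (Q ∪ {B}) := by
  obtain ⟨C, hC, D, hD, hCD, rfl⟩ := h
  have hBC : B ≠ C := fun h => hB (h ▸ hC)
  have hBD : B ≠ D := fun h => hB (h ▸ hD)
  refine ⟨C, Finset.mem_union_left _ hC, D, Finset.mem_union_left _ hD, hCD, ?_⟩
  ext E
  have h1 : E = B → E ≠ C := fun h => h ▸ hBC
  have h2 : E = B → E ≠ D := fun h => h ▸ hBD
  simp only [Finset.mem_union, Finset.mem_sdiff, Finset.mem_singleton, Finset.mem_insert]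
  tauto

lemma reachIn_lift {S B : Finset α} {P Q : Finset (Finset α)} (hB : B.Nonempty)
    (hdisj : Disjoint B S) (hP : IsPartition S P) {k : ℕ}
    (h : ReachIn (SM (α := α)) k P Q) : ReachIn (SM (α := α)) k (P ∪ {B}) (Q ∪ {B}) := by
  obtain ⟨f, hf0, hfk, hf⟩ := h
  have hpart : ∀ i, i ≤ k → IsPartition S (f i) := by
    intro i
    induction i with
    | zero => intro _; rwa [hf0]
    | succ n ih =>
      intro hn
      exact sm_isPartition (ih (by omega)) (hf n (by omega))
  have hBnot : ∀ i, i ≤ k → B ∉ f i := by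
    intro i hi hmem
    have hsub : B ⊆ S := by
      rw [← (hpart i hi).2.2]
      exact Finset.subset_biUnion_of_mem id hmem
    obtain ⟨b, hb⟩ := hB
    exact Finset.disjoint_left.1 hdisj hb (hsub hb)
  refine ⟨fun i => f i ∪ {B}, by dsimp only; rw [hf0], by dsimp only; rw [hfk], ?_⟩
  intro i hi
  rcases hf i hi with h | h
  · exact Or.inl (split_lift (hBnot i hi.le) h)
  · exact Or.inr (merge_lift (hBnot i hi.le) h)

lemma cupd_notMem {A : Finset α} {P : Finset (Finset α)} (hP : IsPartition A P)
    {C D : Finset α} (hC : C ∈ P) (hD : D ∈ P) (hCD : C ≠ D) : C ∪ D ∉ P := by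
  intro hmem
  obtain ⟨hne, hdisj, -⟩ := hP
  have h1 : C ≠ C ∪ D := by
    intro h
    have hd : Disjoint D C := (hdisj C hC D hD hCD).symm
    have hDC : D ⊆ C := h ▸ Finset.subset_union_right
    exact (hne D hD).ne_empty (Finset.eq_empty_of_forall_notMem
      (fun x hx => Finset.disjoint_left.1 hd hx (hDC hx)))
  have h2 : Disjoint C (C ∪ D) := hdisj C hC (C ∪ D) hmem h1
  obtain ⟨c, hc⟩ := hne C hC
  exact Finset.disjoint_left.1 h2 hc (Finset.mem_union_left _ hc)

/-- Merging all blocks in a nonempty subfamily `S` of a partition `P`, using `|S| - 1` merges. -/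
lemma merge_chain {A : Finset α} : ∀ (n : ℕ) (P S : Finset (Finset α)), S.card = n →
    IsPartition A P → S ⊆ P → S.Nonempty →
    ReachIn (SM (α := α)) (S.card - 1) P ((P \ S) ∪ {S.biUnion id}) ∧
      IsPartition A ((P \ S) ∪ {S.biUnion id}) := by
  intro n
  induction n using Nat.strong_induction_on with
  | _ n ih =>
    intro P S hcard hP hSP hSne
    rcases Nat.lt_or_ge n 2 with hn | hn
    · -- S is a singleton
      have h1 : S.card = 1 := by
        have := Finset.card_pos.2 hSne
        omega
      obtain ⟨C, rfl⟩ := Finset.card_eq_one.1 h1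
      have hCP : C ∈ P := hSP (Finset.mem_singleton_self C)
      have hbu : ({C} : Finset (Finset α)).biUnion id = C := by
        simp
      have heq : (P \ {C}) ∪ {({C} : Finset (Finset α)).biUnion id} = P := by
        rw [hbu, Finset.sdiff_union_of_subset (Finset.singleton_subset_iff.2 hCP)]
      rw [heq, h1]
      exact ⟨reachIn_refl P, hP⟩
    · -- pick two distinct blocks of S and merge them
      obtain ⟨C, hCS, D, hDS, hCD⟩ := Finset.one_lt_card.1 (by omega : 1 < S.card)
      have hCP : C ∈ P := hSP hCS
      have hDP : D ∈ P := hSP hDS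
      have hnotP : C ∪ D ∉ P := cupd_notMem hP hCP hDP hCD
      have hnotS : C ∪ D ∉ S := fun h => hnotP (hSP h)
      set P' := (P \ {C, D}) ∪ {C ∪ D} with hP'
      set S' := (S \ {C, D}) ∪ {C ∪ D} with hS'
      have hmerge : Merge P P' := ⟨C, hCP, D, hDP, hCD, rfl⟩
      have hP'part : IsPartition A P' := merge_isPartition hP hmerge
      have hS'P' : S' ⊆ P' :=
        Finset.union_subset_union (Finset.sdiff_subset_sdiff hSP le_rfl) le_rfl
      have hS'card : S'.card = n - 1 := by
        have h2 : (S \ {C, D}).card = S.card - 2 := by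
          rw [Finset.card_sdiff_of_subset (by
            intro x hx
            rcases Finset.mem_insert.1 hx with rfl | hx
            · exact hCS
            · rw [Finset.mem_singleton.1 hx]; exact hDS)]
          have : ({C, D} : Finset (Finset α)).card = 2 := by
            rw [Finset.card_insert_of_notMem (by simpa using hCD), Finset.card_singleton]
          rw [this]
        have h3 : C ∪ D ∉ S \ {C, D} := fun h => hnotS (Finset.mem_sdiff.1 h).1
        rw [hS', Finset.union_comm, ← Finset.insert_eq, Finset.card_insert_of_notMem h3, h2]
        have := Finset.card_pos.2 hSne
        omega
      have hS'ne : S'.Nonempty := ⟨C ∪ D, Finset.mem_union_right _ (Finset.mem_singleton_self _)⟩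
      obtain ⟨hreach', hpart'⟩ := ih (n - 1) (by omega) P' S' hS'card hP'part hS'P' hS'ne
      -- identify the targets
      have hPS : P' \ S' = P \ S := by
        ext x
        constructor
        · intro hx
          obtain ⟨hx1, hx2⟩ := Finset.mem_sdiff.1 hx
          have hxCD : x ≠ C ∪ D := by
            intro h
            exact hx2 (h ▸ Finset.mem_union_right _ (Finset.mem_singleton_self _))
          have hxP' : x ∈ P \ {C, D} := by
            rcases Finset.mem_union.1 hx1 with h | h
            · exact h
            · exact absurd (Finset.mem_singleton.1 h) hxCD
          refine Finset.mem_sdiff.2 ⟨(Finset.mem_sdiff.1 hxP').1, fun hxS => ?_⟩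
          exact hx2 (Finset.mem_union_left _
            (Finset.mem_sdiff.2 ⟨hxS, (Finset.mem_sdiff.1 hxP').2⟩))
        · intro hx
          obtain ⟨hxP, hxS⟩ := Finset.mem_sdiff.1 hx
          have hxC : x ∉ ({C, D} : Finset (Finset α)) := by
            intro h
            rcases Finset.mem_insert.1 h with rfl | h
            · exact hxS hCS
            · exact hxS ((Finset.mem_singleton.1 h) ▸ hDS)
          have hxCD : x ≠ C ∪ D := fun h => hnotP (h ▸ hxP)
          refine Finset.mem_sdiff.2 ⟨Finset.mem_union_left _ (Finset.mem_sdiff.2 ⟨hxP, hxC⟩), ?_⟩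
          intro h
          rcases Finset.mem_union.1 h with h | h
          · exact hxS (Finset.mem_sdiff.1 h).1
          · exact hxCD (Finset.mem_singleton.1 h)
      have hbu : S'.biUnion id = S.biUnion id := biUnion_merge hCS hDS
      rw [hPS, hbu] at hreach' hpart'
      rw [hS'card] at hreach'
      have htot := reachIn_trans (reachIn_single (Or.inr hmerge)) hreach'
      have harith : 1 + (n - 1 - 1) = S.card - 1 := by omega
      rw [harith] at htot
      exact ⟨htot, hpart'⟩

lemma partition_empty {P : Finset (Finset α)} (hP : IsPartition ∅ P) : P = ∅ := by
  obtain ⟨hne, -, hcov⟩ := hP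
  refine Finset.eq_empty_of_forall_notMem (fun C hC => ?_)
  obtain ⟨c, hc⟩ := hne C hC
  have : c ∈ (∅ : Finset α) := hcov ▸ Finset.mem_biUnion.2 ⟨C, hC, hc⟩
  exact absurd this (Finset.notMem_empty c)

lemma partition_singleton {x : α} {P : Finset (Finset α)} (hP : IsPartition {x} P) :
    P = {({x} : Finset α)} := by
  obtain ⟨hne, -, hcov⟩ := hP
  have hblock : ∀ C ∈ P, C = {x} := by
    intro C hC
    have hsub : C ⊆ {x} := by
      rw [← hcov]
      exact Finset.subset_biUnion_of_mem id hC
    obtain ⟨c, hc⟩ := hne C hC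
    apply Finset.Subset.antisymm hsub
    intro y hy
    rw [Finset.mem_singleton.1 hy]
    have := Finset.mem_singleton.1 (hsub hc)
    rwa [← this]
  have hx : x ∈ P.biUnion id := hcov ▸ Finset.mem_singleton_self x
  obtain ⟨C, hC, -⟩ := Finset.mem_biUnion.1 hx
  ext D
  simp only [Finset.mem_singleton]
  constructor
  · exact fun hD => hblock D hD
  · rintro rfl
    rwa [← hblock C hC]

lemma partition_small_unique {A : Finset α} (hA : A.card ≤ 1) {P Q : Finset (Finset α)}
    (hP : IsPartition A P) (hQ : IsPartition A Q) : P = Q := by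
  rcases Nat.lt_or_ge A.card 1 with h | h
  · have hA0 : A = ∅ := Finset.card_eq_zero.1 (by omega)
    subst hA0
    rw [partition_empty hP, partition_empty hQ]
  · have h1 : A.card = 1 := by omega
    obtain ⟨x, rfl⟩ := Finset.card_eq_one.1 h1
    rw [partition_singleton hP, partition_singleton hQ]

lemma partition_restrict {A : Finset α} {P : Finset (Finset α)} {B : Finset α}
    (hP : IsPartition A P) (hB : B ∈ P) : IsPartition (A \ B) (P \ {B}) := by
  obtain ⟨hne, hdisj, hcov⟩ := hP
  refine ⟨fun C hC => hne C (Finset.mem_sdiff.1 hC).1,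
    fun C hC D hD h => hdisj C (Finset.mem_sdiff.1 hC).1 D (Finset.mem_sdiff.1 hD).1 h, ?_⟩
  ext a
  simp only [Finset.mem_biUnion, Finset.mem_sdiff, Finset.mem_singleton, id]
  constructor
  · rintro ⟨C, ⟨hCP, hCB⟩, ha⟩
    refine ⟨hcov ▸ Finset.mem_biUnion.2 ⟨C, hCP, ha⟩, fun haB => ?_⟩
    exact Finset.disjoint_left.1 (hdisj C hCP B hB hCB) ha haB
  · rintro ⟨haA, haB⟩
    have : a ∈ P.biUnion id := hcov ▸ haA
    obtain ⟨C, hCP, ha⟩ := Finset.mem_biUnion.1 this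
    exact ⟨C, ⟨hCP, fun h => haB (h ▸ ha)⟩, ha⟩

/-- Key lemma: strong induction on `|A|`. -/
lemma key_lemma : ∀ (n : ℕ) (A : Finset α) (P₁ P₂ : Finset (Finset α)), A.card = n →
    IsPartition A P₁ → IsPartition A P₂ → P₁ ≠ P₂ →
    ∃ k ≤ A.card - 1, ReachIn (SM (α := α)) k P₁ P₂ := by
  intro n
  induction n using Nat.strong_induction_on with
  | _ n ih =>
    intro A P₁ P₂ hcard h₁ h₂ hne
    -- P₂ is nonempty
    have hP₂ne : P₂.Nonempty := by
      rw [Finset.nonempty_iff_ne_empty]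
      rintro rfl
      have hA : A = ∅ := by rw [← h₂.2.2]; simp
      exact hne (partition_empty (hA ▸ h₁))
    obtain ⟨B, hB⟩ := hP₂ne
    have hBne : B.Nonempty := h₂.1 B hB
    have hBsub : B ⊆ A := by
      rw [← h₂.2.2]
      exact Finset.subset_biUnion_of_mem id hB
    have hAcard : 1 ≤ A.card := by
      obtain ⟨b, hb⟩ := hBne
      exact Finset.card_pos.2 ⟨b, hBsub hb⟩
    -- the blocks of P₁ meeting B
    set S := P₁.filter (fun C => (C ∩ B).Nonempty) with hS
    have hSP : S ⊆ P₁ := Finset.filter_subset _ _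
    have hmem_of : ∀ b ∈ B, ∃ C ∈ S, b ∈ C := by
      intro b hb
      have : b ∈ P₁.biUnion id := h₁.2.2 ▸ hBsub hb
      obtain ⟨C, hCP, hbC⟩ := Finset.mem_biUnion.1 this
      exact ⟨C, Finset.mem_filter.2 ⟨hCP, ⟨b, Finset.mem_inter.2 ⟨hbC, hb⟩⟩⟩, hbC⟩
    have hSne : S.Nonempty := by
      obtain ⟨b, hb⟩ := hBne
      obtain ⟨C, hCS, -⟩ := hmem_of b hb
      exact ⟨C, hCS⟩
    set U := S.biUnion id with hU
    have hBU : B ⊆ U := by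
      intro b hb
      obtain ⟨C, hCS, hbC⟩ := hmem_of b hb
      exact Finset.mem_biUnion.2 ⟨C, hCS, hbC⟩
    have hUA : U ⊆ A := by
      rw [← h₁.2.2]
      exact Finset.biUnion_subset_biUnion_of_subset_left id hSP
    -- |S| ≤ |B|
    have hScard : S.card ≤ B.card := by
      have hd : ∀ x ∈ S, ∀ y ∈ S, x ≠ y → Disjoint (x ∩ B) (y ∩ B) := by
        intro x hx y hy hxy
        exact (h₁.2.1 x (hSP hx) y (hSP hy) hxy).mono Finset.inter_subset_left
          Finset.inter_subset_left
      calc S.card = ∑ C ∈ S, 1 := by simp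
        _ ≤ ∑ C ∈ S, (C ∩ B).card := Finset.sum_le_sum (fun C hC =>
            Finset.card_pos.2 (Finset.mem_filter.1 hC).2)
        _ = (S.biUnion (fun C => C ∩ B)).card := (Finset.card_biUnion hd).symm
        _ ≤ B.card := Finset.card_le_card (Finset.biUnion_subset.2
            (fun C _ => Finset.inter_subset_right))
    obtain ⟨hreach₁, hQpart⟩ := merge_chain S.card P₁ S rfl h₁ hSP hSne
    set Q := (P₁ \ S) ∪ {U} with hQ
    have hUQ : U ∈ Q := Finset.mem_union_right _ (Finset.mem_singleton_self U)
    -- after the merges (and possibly one split), reach a partition P' containing B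
    have hmain : ∃ (P' : Finset (Finset α)) (k₁ : ℕ), ReachIn (SM (α := α)) k₁ P₁ P' ∧
        IsPartition A P' ∧ B ∈ P' ∧ k₁ ≤ B.card ∧ (k₁ < B.card ∨ B.card < A.card) := by
      by_cases hUB : U = B
      · refine ⟨Q, S.card - 1, hreach₁, hQpart, hUB ▸ hUQ, by omega, Or.inl ?_⟩
        have := Finset.card_pos.2 hSne
        omega
      · have hUBne : (U \ B).Nonempty := by
          rw [Finset.sdiff_nonempty]
          intro h
          exact hUB (Finset.Subset.antisymm h hBU)
        have hsplit : Split Q ((Q \ {U}) ∪ {B, U \ B}) :=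
          ⟨U, hUQ, B, U \ B, hBne, hUBne, Finset.disjoint_sdiff,
            Finset.union_sdiff_of_subset hBU, rfl⟩
        have hP'part : IsPartition A ((Q \ {U}) ∪ {B, U \ B}) :=
          split_isPartition hQpart hsplit
        have hBP' : B ∈ (Q \ {U}) ∪ {B, U \ B} :=
          Finset.mem_union_right _ (Finset.mem_insert_self _ _)
        have hBltA : B.card < A.card := by
          have h1 : B.card < U.card := Finset.card_lt_card
            (Finset.ssubset_iff_subset_ne.2 ⟨hBU, fun h => hUB h.symm⟩)
          exact lt_of_lt_of_le h1 (Finset.card_le_card hUA)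
        have hreach := reachIn_trans hreach₁ (reachIn_single (Or.inl hsplit))
        have hcount : S.card - 1 + 1 = S.card := by
          have := Finset.card_pos.2 hSne
          omega
        rw [hcount] at hreach
        exact ⟨_, S.card, hreach, hP'part, hBP', hScard, Or.inr hBltA⟩
    obtain ⟨P', k₁, hreach, hP'part, hBP', hk₁, hdisj'⟩ := hmain
    have hBcard : 1 ≤ B.card := Finset.card_pos.2 hBne
    have hBA : B.card ≤ A.card := Finset.card_le_card hBsub
    by_cases hP' : P' = P₂
    · exact ⟨k₁, by omega, hP' ▸ hreach⟩
    · -- recurse on A \ B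
      have h₁' : IsPartition (A \ B) (P' \ {B}) := partition_restrict hP'part hBP'
      have h₂' : IsPartition (A \ B) (P₂ \ {B}) := partition_restrict h₂ hB
      have hne' : P' \ {B} ≠ P₂ \ {B} := by
        intro h
        apply hP'
        rw [← Finset.sdiff_union_of_subset (Finset.singleton_subset_iff.2 hBP'), h,
          Finset.sdiff_union_of_subset (Finset.singleton_subset_iff.2 hB)]
      have hABcard : (A \ B).card = A.card - B.card := Finset.card_sdiff_of_subset hBsub
      have hlt : (A \ B).card < n := by omega
      obtain ⟨k₂, hk₂, hreach₂⟩ := ih (A \ B).card hlt (A \ B) (P' \ {B}) (P₂ \ {B})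
        rfl h₁' h₂' hne'
      have hlift := reachIn_lift hBne Finset.disjoint_sdiff h₁' hreach₂
      rw [Finset.sdiff_union_of_subset (Finset.singleton_subset_iff.2 hBP'),
        Finset.sdiff_union_of_subset (Finset.singleton_subset_iff.2 hB)] at hlift
      exact ⟨k₁ + k₂, by omega, reachIn_trans hreach hlift⟩

theorem path_between_partitions (A : Finset α) (hA : 2 ≤ A.card)
    (P₁ P₂ : Finset (Finset α)) (h₁ : IsPartition A P₁) (h₂ : IsPartition A P₂)
    (hne : P₁ ≠ P₂) :
    ∃ k ≤ A.card - 1,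
      ReachIn (fun P Q => Split P Q ∨ Merge P Q) k P₁ P₂ :=
  key_lemma A.card A P₁ P₂ rfl h₁ h₂ hne
end

section
/- Swapping two agents between two blocks of a partition can be realized by a sequence of exactly four operations: a split, a merge, a split, and a merge. Specifically, given a partition P with distinct blocks C_i, C_j with |C_i| ≥ 2, |C_j| ≥ 2, and elements a ∈ C_i, b ∈ C_j, the partition (P \ {C_i, C_j}) ∪ {(C_i \ {a}) ∪ {b}, (C_j \ {b}) ∪ {a}} is reachable from P via split(C_i → C_i\{a}, {a}), merge({a}, C_j), split(C_j ∪ {a} → (C_j ∪ {a})\{b}, {b}), merge(C_i\{a}, {b}). -/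
set_option maxHeartbeats 2000000


variable {α : Type*} [DecidableEq α]

theorem swap_as_four_operations (A : Finset α) (P : Finset (Finset α))
    (hP : IsPartition A P) (Ci Cj : Finset α) (hi : Ci ∈ P) (hj : Cj ∈ P)
    (hne : Ci ≠ Cj) (a b : α) (ha : a ∈ Ci) (hb : b ∈ Cj)
    (hci : 2 ≤ Ci.card) (hcj : 2 ≤ Cj.card) :
    Split P ((P \ {Ci}) ∪ {Ci \ {a}, {a}}) ∧
    Merge ((P \ {Ci}) ∪ {Ci \ {a}, {a}})
      ((((P \ {Ci}) ∪ {Ci \ {a}, {a}}) \ {{a}, Cj}) ∪ {{a} ∪ Cj}) ∧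
    Split ((((P \ {Ci}) ∪ {Ci \ {a}, {a}}) \ {{a}, Cj}) ∪ {{a} ∪ Cj})
      (((((P \ {Ci}) ∪ {Ci \ {a}, {a}}) \ {{a}, Cj}) ∪ {{a} ∪ Cj}) \ {{a} ∪ Cj}
        ∪ {({a} ∪ Cj) \ {b}, {b}}) ∧
    Merge (((((P \ {Ci}) ∪ {Ci \ {a}, {a}}) \ {{a}, Cj}) ∪ {{a} ∪ Cj}) \ {{a} ∪ Cj}
        ∪ {({a} ∪ Cj) \ {b}, {b}})
      ((P \ {Ci, Cj}) ∪ {(Ci \ {a}) ∪ {b}, (Cj \ {b}) ∪ {a}}) := by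
  obtain ⟨hnn, hd, -⟩ := hP
  have hdij : Disjoint Ci Cj := hd Ci hi Cj hj hne
  have haj : a ∉ Cj := fun h => (Finset.disjoint_left.mp hdij ha) h
  have hbi : b ∉ Ci := fun h => (Finset.disjoint_left.mp hdij h) hb
  have hab : a ≠ b := fun h => haj (h ▸ hb)
  have hia : (Ci \ {a}).Nonempty := by
    obtain ⟨c, hc, hca⟩ := Finset.exists_mem_ne hci a
    exact ⟨c, Finset.mem_sdiff.mpr ⟨hc, by simpa using hca⟩⟩
  have hja : a ∉ Ci \ {a} := by simp
  have d1 : Ci \ {a} ≠ {a} := by intro h; rw [h] at hja; simp at hja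
  have d2 : Ci \ {a} ≠ Cj := by
    intro h
    obtain ⟨c, hc⟩ := hia
    exact (Finset.disjoint_left.mp hdij (Finset.mem_sdiff.mp hc).1) (h ▸ hc)
  have d3 : ({a} : Finset α) ≠ Cj := fun h => haj (h ▸ Finset.mem_singleton_self a)
  have d4 : Ci \ {a} ≠ {a} ∪ Cj := by
    intro h
    exact hja (h ▸ (by simp : a ∈ {a} ∪ Cj))
  have d5 : Ci \ {a} ≠ {b} := by
    intro h
    exact hbi (Finset.mem_sdiff.mp (h ▸ Finset.mem_singleton_self b)).1
  have hamem : a ∈ ({a} ∪ Cj) \ {b} := by simp [hab]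
  have d7 : ({a} ∪ Cj) \ {b} ≠ {a} ∪ Cj := by
    intro h
    have hbm : b ∈ ({a} ∪ Cj) \ {b} := by rw [h]; simp [hb]
    simp at hbm
  have d8 : ({a} ∪ Cj) \ {b} ≠ Ci \ {a} := fun h => hja (h ▸ hamem)
  have d9 : ({a} ∪ Cj) \ {b} ≠ {b} := fun h => hab (Finset.mem_singleton.mp (h ▸ hamem))
  have key : ∀ X ∈ P, X ≠ Ci → X ≠ Cj →
      X ≠ {a} ∧ X ≠ Ci \ {a} ∧ X ≠ {a} ∪ Cj ∧ X ≠ {b} ∧ X ≠ ({a} ∪ Cj) \ {b} := by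
    intro X hX hXi hXj
    have hdi : Disjoint X Ci := hd X hX Ci hi hXi
    have hdj : Disjoint X Cj := hd X hX Cj hj hXj
    have hXa : a ∉ X := fun h => Finset.disjoint_left.mp hdi h ha
    have hXb : b ∉ X := fun h => Finset.disjoint_left.mp hdj h hb
    obtain ⟨x, hx⟩ := hnn X hX
    refine ⟨fun h => hXa (h ▸ Finset.mem_singleton_self a), ?_, fun h => hXa (h ▸ (by simp)),
      fun h => hXb (h ▸ Finset.mem_singleton_self b), ?_⟩
    · intro h
      exact Finset.disjoint_left.mp hdi hx (Finset.mem_sdiff.mp (h ▸ hx)).1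
    · intro h
      have hx' := Finset.mem_sdiff.mp (h ▸ hx)
      rcases Finset.mem_union.mp hx'.1 with h1 | h1
      · exact hXa (Finset.mem_singleton.mp h1 ▸ hx)
      · exact Finset.disjoint_left.mp hdj hx h1
  have ekey : ({a} ∪ Cj) \ {b} = (Cj \ {b}) ∪ {a} := by
    ext x
    simp only [Finset.mem_sdiff, Finset.mem_union, Finset.mem_singleton]
    constructor
    · rintro ⟨h1 | h1, h2⟩
      · exact Or.inr h1
      · exact Or.inl ⟨h1, h2⟩
    · rintro (⟨h1, h2⟩ | h1)
      · exact ⟨Or.inr h1, h2⟩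
      · exact ⟨Or.inl h1, h1 ▸ hab⟩
  refine ⟨?_, ?_, ?_, ?_⟩
  · exact ⟨Ci, hi, Ci \ {a}, {a}, hia, Finset.singleton_nonempty a, by simp,
      by rw [Finset.sdiff_union_self_eq_union];
         exact Finset.union_eq_left.mpr (by simpa using ha), rfl⟩
  · refine ⟨{a}, Finset.mem_union_right _ (by simp), Cj,
      Finset.mem_union_left _ (Finset.mem_sdiff.mpr ⟨hj, by simp [hne.symm]⟩), d3, rfl⟩
  · refine ⟨{a} ∪ Cj, Finset.mem_union_right _ (by simp), ({a} ∪ Cj) \ {b}, {b},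
      ⟨a, hamem⟩, Finset.singleton_nonempty b, by simp, ?_, rfl⟩
    rw [Finset.sdiff_union_self_eq_union]
    exact Finset.union_eq_left.mpr (by simp [hb])
  · refine ⟨Ci \ {a}, ?_, {b}, Finset.mem_union_right _ (by simp), d5, ?_⟩
    · refine Finset.mem_union_left _ (Finset.mem_sdiff.mpr ⟨?_, ?_⟩)
      · refine Finset.mem_union_left _ (Finset.mem_sdiff.mpr ⟨?_, ?_⟩)
        · exact Finset.mem_union_right _ (Finset.mem_insert_self (Ci \ {a}) {{a}})
        · simp only [Finset.mem_insert, Finset.mem_singleton]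
          exact not_or.mpr ⟨d1, d2⟩
      · simp only [Finset.mem_singleton]
        exact d4
    · rw [← ekey]
      ext X
      simp only [Finset.mem_union, Finset.mem_sdiff, Finset.mem_insert, Finset.mem_singleton,
        not_or]
      constructor
      · rintro (⟨hXP, hXi, hXj⟩ | hX | hX)
        · obtain ⟨k1, k2, k3, k4, k5⟩ := key X hXP hXi hXj
          tauto
        · tauto
        · subst hX
          tauto
      · tauto
end

section
/- If from a partition P with l ≥ 2 blocks of an n-element set one performs n−l splits to reach the discrete partition, followed by merges that never combine two blocks unless all their elements lie in a common block of a target partition P' with l' blocks, then after n−l' such merges the resulting partition is exactly P'. -/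
variable {α : Type*} [DecidableEq α]

/-- A partition refining another partition with the same number of blocks equals it. -/
lemma refine_eq_of_card_eq (A : Finset α) (Q P' : Finset (Finset α))
    (hQ : IsPartition A Q) (hP' : IsPartition A P')
    (href : ∀ D ∈ Q, ∃ C ∈ P', D ⊆ C) (hcard : Q.card = P'.card) : Q = P' := by
  classical
  obtain ⟨hQne, hQdisj, hQun⟩ := hQ
  obtain ⟨hP'ne, hP'disj, hP'un⟩ := hP'
  -- choice of containing block
  choose f hfmem hfsub using href
  -- uniqueness of containing block
  have huniq : ∀ D hD, ∀ C ∈ P', (D ∩ C).Nonempty → f D hD = C := by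
    intro D hD C hC ⟨a, ha⟩
    by_contra hne
    have := hP'disj _ (hfmem D hD) _ hC hne
    have ha1 : a ∈ f D hD := hfsub D hD (Finset.mem_inter.1 ha).1
    have ha2 : a ∈ C := (Finset.mem_inter.1 ha).2
    exact (Finset.disjoint_left.1 this ha1) ha2
  -- surjectivity
  have hsurj : ∀ C ∈ P', ∃ D hD, f D hD = C := by
    intro C hC
    obtain ⟨a, ha⟩ := hP'ne C hC
    have haA : a ∈ A := hP'un ▸ Finset.mem_biUnion.2 ⟨C, hC, ha⟩
    obtain ⟨D, hD, haD⟩ := Finset.mem_biUnion.1 (hQun ▸ haA)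
    exact ⟨D, hD, huniq D hD C hC ⟨a, Finset.mem_inter.2 ⟨haD, ha⟩⟩⟩
  have hinj := Finset.inj_on_of_surj_on_of_card_le f hfmem hsurj (le_of_eq hcard)
  -- show P' ⊆ Q by showing each C ∈ P' equals the unique D with f D = C
  have hsub : P' ⊆ Q := by
    intro C hC
    obtain ⟨D, hD, hfD⟩ := hsurj C hC
    have hCD : C ⊆ D := by
      intro a ha
      have haA : a ∈ A := hP'un ▸ Finset.mem_biUnion.2 ⟨C, hC, ha⟩
      obtain ⟨D', hD', haD'⟩ := Finset.mem_biUnion.1 (hQun ▸ haA)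
      have : f D' hD' = C := huniq D' hD' C hC ⟨a, Finset.mem_inter.2 ⟨haD', ha⟩⟩
      have : D' = D := hinj hD' hD (this.trans hfD.symm)
      exact this ▸ haD'
    have hDC : D ⊆ C := hfD ▸ hfsub D hD
    rwa [Finset.Subset.antisymm hCD hDC]
  exact (Finset.eq_of_subset_of_card_le hsub (le_of_eq hcard)).symm

theorem split_then_merge_correct (A : Finset α)
    (P P' : Finset (Finset α)) (l l' : ℕ)
    (hP : IsPartition A P) (hP' : IsPartition A P')
    (hl : P.card = l) (hl2 : 2 ≤ l) (hl' : P'.card = l')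
    (hsplit : ReachIn Split (A.card - l) P (A.image fun a => ({a} : Finset α)))
    (g : ℕ → Finset (Finset α))
    (hg0 : g 0 = A.image fun a => ({a} : Finset α))
    (hstep : ∀ i < A.card - l', ∃ D₁ ∈ g i, ∃ D₂ ∈ g i, D₁ ≠ D₂ ∧
      (∃ C ∈ P', D₁ ∪ D₂ ⊆ C) ∧ g (i + 1) = (g i \ {D₁, D₂}) ∪ {D₁ ∪ D₂}) :
    g (A.card - l') = P' := by
  classical
  obtain ⟨hP'ne, hP'disj, hP'un⟩ := hP'
  set N := A.card - l' with hN
  -- invariant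
  have inv : ∀ i ≤ N, IsPartition A (g i) ∧ (∀ D ∈ g i, ∃ C ∈ P', D ⊆ C) ∧
      (g i).card + i = A.card := by
    intro i
    induction i with
    | zero =>
      intro _
      refine ⟨⟨?_, ?_, ?_⟩, ?_, ?_⟩
      · rintro C hC
        rw [hg0] at hC
        obtain ⟨a, _, rfl⟩ := Finset.mem_image.1 hC
        exact ⟨a, Finset.mem_singleton_self a⟩
      · rintro C hC D hD hne
        rw [hg0] at hC hD
        obtain ⟨a, _, rfl⟩ := Finset.mem_image.1 hC
        obtain ⟨b, _, rfl⟩ := Finset.mem_image.1 hD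
        simp only [Finset.disjoint_singleton_left, Finset.mem_singleton]
        intro h; exact hne (by rw [h])
      · rw [hg0]
        ext x
        simp [Finset.mem_biUnion]
      · intro D hD
        rw [hg0] at hD
        obtain ⟨a, haA, rfl⟩ := Finset.mem_image.1 hD
        obtain ⟨C, hC, haC⟩ := Finset.mem_biUnion.1 (hP'un ▸ haA)
        exact ⟨C, hC, Finset.singleton_subset_iff.2 haC⟩
      · rw [hg0, Finset.card_image_of_injective _ (fun a b h => by
          simpa using h)]
        omega
    | succ i ih =>
      intro hiN
      have hi : i < N := Nat.lt_of_succ_le hiN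
      obtain ⟨⟨hne, hdisj, hun⟩, href, hcard⟩ := ih (le_of_lt hi)
      obtain ⟨D₁, hD₁, D₂, hD₂, hD12, ⟨C, hC, hsubC⟩, heq⟩ := hstep i hi
      have hdisj12 : Disjoint D₁ D₂ := hdisj _ hD₁ _ hD₂ hD12
      have hU1 : D₁ ∪ D₂ ≠ D₁ := by
        intro h
        have : D₂ ⊆ D₁ := h ▸ Finset.subset_union_right
        obtain ⟨a, ha⟩ := hne _ hD₂
        exact (Finset.disjoint_right.1 hdisj12 ha) (this ha)
      have hU2 : D₁ ∪ D₂ ≠ D₂ := by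
        intro h
        have : D₁ ⊆ D₂ := h ▸ Finset.subset_union_left
        obtain ⟨a, ha⟩ := hne _ hD₁
        exact (Finset.disjoint_left.1 hdisj12 ha) (this ha)
      have hUnotmem : D₁ ∪ D₂ ∉ g i \ {D₁, D₂} := by
        intro h
        have hmem := (Finset.mem_sdiff.1 h).1
        have hne' := (Finset.mem_sdiff.1 h).2
        have hneq1 : D₁ ∪ D₂ ≠ D₁ := hU1
        have := hdisj _ hmem _ hD₁ hU1
        obtain ⟨a, ha⟩ := hne _ hD₁
        exact (Finset.disjoint_left.1 this (Finset.mem_union_left _ ha)) ha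
      have hmemg : ∀ E ∈ g (i+1), (E ∈ g i ∧ E ≠ D₁ ∧ E ≠ D₂) ∨ E = D₁ ∪ D₂ := by
        intro E hE
        rw [heq] at hE
        rcases Finset.mem_union.1 hE with h | h
        · rw [Finset.mem_sdiff] at h
          simp only [Finset.mem_insert, Finset.mem_singleton, not_or] at h
          exact Or.inl ⟨h.1, h.2.1, h.2.2⟩
        · exact Or.inr (Finset.mem_singleton.1 h)
      refine ⟨⟨?_, ?_, ?_⟩, ?_, ?_⟩
      · intro E hE
        rcases hmemg E hE with ⟨h, _, _⟩ | rfl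
        · exact hne _ h
        · obtain ⟨a, ha⟩ := hne _ hD₁
          exact ⟨a, Finset.mem_union_left _ ha⟩
      · intro E hE F hF hEF
        rcases hmemg E hE with ⟨hEg, hE1, hE2⟩ | rfl <;>
          rcases hmemg F hF with ⟨hFg, hF1, hF2⟩ | rfl
        · exact hdisj _ hEg _ hFg hEF
        · exact Finset.disjoint_union_right.2
            ⟨hdisj _ hEg _ hD₁ hE1, hdisj _ hEg _ hD₂ hE2⟩
        · exact (Finset.disjoint_union_left.2
            ⟨hdisj _ hD₁ _ hFg (Ne.symm hF1), hdisj _ hD₂ _ hFg (Ne.symm hF2)⟩)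
        · exact absurd rfl hEF
      · rw [← hun]
        ext x
        simp only [Finset.mem_biUnion, id]
        constructor
        · rintro ⟨B, hB, hxB⟩
          rcases hmemg B hB with ⟨hBg, _, _⟩ | rfl
          · exact ⟨B, hBg, hxB⟩
          · rcases Finset.mem_union.1 hxB with h | h
            exacts [⟨D₁, hD₁, h⟩, ⟨D₂, hD₂, h⟩]
        · rintro ⟨B, hB, hxB⟩
          by_cases h1 : B = D₁
          · exact ⟨D₁ ∪ D₂, heq ▸ Finset.mem_union_right _ (Finset.mem_singleton_self _),
              Finset.mem_union_left _ (h1 ▸ hxB)⟩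
          by_cases h2 : B = D₂
          · exact ⟨D₁ ∪ D₂, heq ▸ Finset.mem_union_right _ (Finset.mem_singleton_self _),
              Finset.mem_union_right _ (h2 ▸ hxB)⟩
          · refine ⟨B, heq ▸ Finset.mem_union_left _ ?_, hxB⟩
            rw [Finset.mem_sdiff]
            simp [hB, h1, h2]
      · intro E hE
        rcases hmemg E hE with ⟨hEg, _, _⟩ | rfl
        · exact href _ hEg
        · exact ⟨C, hC, hsubC⟩
      · have hpair : ({D₁, D₂} : Finset (Finset α)) ⊆ g i := by
          intro x hx
          rcases Finset.mem_insert.1 hx with rfl | hx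
          · exact hD₁
          · exact (Finset.mem_singleton.1 hx) ▸ hD₂
        have hpaircard : ({D₁, D₂} : Finset (Finset α)).card = 2 :=
          Finset.card_pair hD12
        have h1 : (g i \ {D₁, D₂}).card = (g i).card - 2 := by
          rw [Finset.card_sdiff_of_subset hpair, hpaircard]
        have h2 : (g (i+1)).card = (g i \ {D₁, D₂}).card + 1 := by
          rw [heq, Finset.union_comm, ← Finset.insert_eq,
            Finset.card_insert_of_notMem hUnotmem]
        have hge2 : 2 ≤ (g i).card := by
          rw [← hpaircard]; exact Finset.card_le_card hpair
        omega
  -- conclude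
  have hl'A : l' ≤ A.card := by
    have : A.card = ∑ C ∈ P', C.card := by
      rw [← hP'un]
      exact Finset.card_biUnion hP'disj
    have h1 : P'.card ≤ ∑ C ∈ P', C.card := by
      calc P'.card = ∑ _C ∈ P', 1 := by simp
        _ ≤ ∑ C ∈ P', C.card := Finset.sum_le_sum fun C hC =>
            Finset.card_pos.2 (hP'ne C hC)
    omega
  obtain ⟨hpart, href, hcard⟩ := inv N le_rfl
  have : (g N).card = l' := by omega
  exact refine_eq_of_card_eq A (g N) P' hpart ⟨hP'ne, hP'disj, hP'un⟩ href
    (by rw [this, hl'])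
end
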